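/- arXiv:2306.14648 — 4 statements merged into one kernel-verified Lean document; each statement's English description precedes it below -/
import Mathlib

section
/- Let T be an n-vertex oriented tree with a valid edge ordering e_1, ..., e_{n-1}, let i ∈ [n-2], and let T_0 = {e_1, ..., e_{n-1-i}} be a subtree of T on n - i vertices. Let D be an n-vertex digraph and φ_0 an embedding of T_0 into D. Suppose there exists a family S of vertex-disjoint stars in T_0 such that for all u, w ∈ V(D) and * ∈ {+, -}, the number of stars in S that are (u,*,w)-absorbing under φ_0 is at least 2i. Then there exists an embedding of T into D. -/
/-!
Embed the last `i` edges one at a time in the valid order; each joins an embedded vertex `p` to a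
new vertex `ν`. Take a vertex `w` of `D` outside the current image and a centre `c` whose star is
still embedded as by `φ₀` and which is `(φ p, *, w)`-absorbing. Moving `c` to `w` keeps its star
embedded, and `ν` goes to the freed vertex `φ₀ c`, which is joined to `φ p` in the right direction.
Each step spoils at most the stars centred at `c` and `p`, so `2i` absorbing stars per pair suffice.
-/

open Set Function

section EdgeSequence

variable {V : Type*} {N : ℕ}

def spannedVertices (e : Fin N → V × V) (t : ℕ) : Set V :=
  {v | ∃ j : Fin N, (j : ℕ) < t ∧ ((e j).1 = v ∨ (e j).2 = v)}

def prefixRel (e : Fin N → V × V) (t : ℕ) (a b : V) : Prop :=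
  ∃ j : Fin N, (j : ℕ) < t ∧ e j = (a, b)

def IsValidOrdering (e : Fin N → V × V) : Prop :=
  ∀ j : Fin N, ∀ h : (j : ℕ) + 1 < N,
    ({v : V | ∃ k : Fin N, k ≤ j ∧ ((e k).1 = v ∨ (e k).2 = v)} ∩
      {(e ⟨(j : ℕ) + 1, h⟩).1, (e ⟨(j : ℕ) + 1, h⟩).2}).ncard = 1

def closedStar (R : V → V → Prop) (v : V) : Set V :=
  {v} ∪ {u | R v u} ∪ {u | R u v}

theorem xor_mem_of_ncard_inter_pair_eq_one {S : Set V} {a b : V} (hab : a ≠ b)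
    (h : (S ∩ {a, b}).ncard = 1) : Xor (a ∈ S) (b ∈ S) := by
  obtain ⟨x, hx⟩ := ncard_eq_one.mp h
  have hmem : ∀ y, y ∈ S ∩ {a, b} ↔ y = x := fun y => by rw [hx, mem_singleton_iff]
  by_cases ha : a ∈ S <;> by_cases hb : b ∈ S
  · exact absurd (((hmem a).mp ⟨ha, Or.inl rfl⟩).trans ((hmem b).mp ⟨hb, Or.inr rfl⟩).symm) hab
  · exact Or.inl ⟨ha, hb⟩
  · exact Or.inr ⟨hb, ha⟩
  · obtain ⟨hxS, rfl | rfl⟩ := (hmem x).mpr rfl <;> contradiction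

variable {e : Fin N → V × V}

theorem spannedVertices_mono {s t : ℕ} (h : s ≤ t) :
    spannedVertices e s ⊆ spannedVertices e t :=
  fun _ ⟨j, hj, hv⟩ => ⟨j, hj.trans_le h, hv⟩

theorem prefixRel_mono {s t : ℕ} (h : s ≤ t) {a b : V} (hab : prefixRel e s a b) :
    prefixRel e t a b :=
  let ⟨j, hj, he⟩ := hab
  ⟨j, hj.trans_le h, he⟩

theorem prefixRel_irrefl (hloop : ∀ j, (e j).1 ≠ (e j).2) {t : ℕ} (a : V) :
    ¬ prefixRel e t a a :=
  fun ⟨j, _, he⟩ => hloop j (by rw [he])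

theorem mem_spannedVertices_of_prefixRel {t : ℕ} {a b : V} (h : prefixRel e t a b) :
    a ∈ spannedVertices e t ∧ b ∈ spannedVertices e t := by
  obtain ⟨j, hj, he⟩ := h
  exact ⟨⟨j, hj, Or.inl (by rw [he])⟩, ⟨j, hj, Or.inr (by rw [he])⟩⟩

theorem closedStar_prefixRel_subset {t : ℕ} {v : V} (hv : v ∈ spannedVertices e t) :
    closedStar (prefixRel e t) v ⊆ spannedVertices e t := by
  rintro u ((rfl | h) | h)
  · exact hv
  · exact (mem_spannedVertices_of_prefixRel h).2
  · exact (mem_spannedVertices_of_prefixRel h).1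

theorem prefixRel_succ {t : ℕ} (ht : t < N) {a b : V} :
    prefixRel e (t + 1) a b ↔ prefixRel e t a b ∨ e ⟨t, ht⟩ = (a, b) := by
  constructor
  · rintro ⟨j, hj, he⟩
    obtain hj | hj := Nat.lt_succ_iff_lt_or_eq.mp hj
    · exact Or.inl ⟨j, hj, he⟩
    · obtain rfl : j = ⟨t, ht⟩ := Fin.ext hj
      exact Or.inr he
  · rintro (h | h)
    · exact prefixRel_mono t.le_succ h
    · exact ⟨_, t.lt_succ_self, h⟩

theorem spannedVertices_succ {t : ℕ} (ht : t < N) :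
    spannedVertices e (t + 1) =
      insert (e ⟨t, ht⟩).1 (insert (e ⟨t, ht⟩).2 (spannedVertices e t)) := by
  ext v
  simp only [spannedVertices, mem_insert_iff, mem_ofPred_eq]
  constructor
  · rintro ⟨j, hj, hv⟩
    obtain hj | hj := Nat.lt_succ_iff_lt_or_eq.mp hj
    · exact Or.inr (Or.inr ⟨j, hj, hv⟩)
    · obtain rfl : j = ⟨t, ht⟩ := Fin.ext hj
      rcases hv with hv | hv
      · exact Or.inl hv.symm
      · exact Or.inr (Or.inl hv.symm)
  · rintro (hv | hv | ⟨j, hj, hv⟩)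
    · exact ⟨_, t.lt_succ_self, Or.inl hv.symm⟩
    · exact ⟨_, t.lt_succ_self, Or.inr hv.symm⟩
    · exact ⟨j, hj.trans t.lt_succ_self, hv⟩

theorem spannedVertices_succ_eq_insert {t : ℕ} (ht : t < N) {p ν : V}
    (hp : p ∈ spannedVertices e t) (he : e ⟨t, ht⟩ = (p, ν) ∨ e ⟨t, ht⟩ = (ν, p)) :
    spannedVertices e (t + 1) = insert ν (spannedVertices e t) := by
  rw [spannedVertices_succ ht]
  rcases he with he | he <;> simp only [he, insert_comm p ν, insert_eq_of_mem hp]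

theorem IsValidOrdering.exists_mem_notMem (hv : IsValidOrdering e)
    (hloop : ∀ j, (e j).1 ≠ (e j).2) {t : ℕ} (ht₀ : 0 < t) (ht : t < N) :
    ∃ p ν, p ∈ spannedVertices e t ∧ ν ∉ spannedVertices e t ∧
      (e ⟨t, ht⟩ = (p, ν) ∨ e ⟨t, ht⟩ = (ν, p)) := by
  have hvt := hv ⟨t - 1, by omega⟩ (by simp only; omega)
  have hS : {v : V | ∃ k : Fin N, k ≤ ⟨t - 1, by omega⟩ ∧ ((e k).1 = v ∨ (e k).2 = v)} =
      spannedVertices e t := by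
    ext v
    simp only [spannedVertices, Fin.le_def]
    exact exists_congr fun k => and_congr_left' (by omega)
  have hidx : (⟨t - 1 + 1, by omega⟩ : Fin N) = ⟨t, ht⟩ := Fin.ext (by simp only; omega)
  rw [hS, hidx] at hvt
  rcases xor_mem_of_ncard_inter_pair_eq_one (hloop _) hvt with ⟨h1, h2⟩ | ⟨h2, h1⟩
  · exact ⟨_, _, h1, h2, Or.inl rfl⟩
  · exact ⟨_, _, h2, h1, Or.inr rfl⟩

theorem IsValidOrdering.ncard_spannedVertices_add [Finite V] (hv : IsValidOrdering e)
    (hloop : ∀ j, (e j).1 ≠ (e j).2) {t : ℕ} (ht₀ : 0 < t) :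
    ∀ k, t + k ≤ N → (spannedVertices e (t + k)).ncard = (spannedVertices e t).ncard + k
  | 0, _ => rfl
  | k + 1, hk => by
    obtain ⟨p, ν, hp, hν, he⟩ := hv.exists_mem_notMem hloop (by omega) (by omega : t + k < N)
    rw [← add_assoc, spannedVertices_succ_eq_insert _ hp he, ncard_insert_of_notMem hν,
      hv.ncard_spannedVertices_add hloop ht₀ k (by omega), add_assoc]

end EdgeSequence

theorem exists_notMem_image_of_ne_univ {α β : Type*} [Finite α] [Finite β]
    (h : Nat.card α ≤ Nat.card β) {S : Set α} (hS : S ≠ univ) (φ : α → β) : ∃ w, w ∉ φ '' S := by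
  by_contra! H
  have hlt := ncard_lt_card hS
  have hle := ncard_image_le (f := φ) (s := S)
  rw [eq_univ_of_forall H, ncard_univ] at hle
  omega

section Relocation

variable {α β : Type*} [DecidableEq α] {φ : α → β} {S : Set α} {c ν : α} {w : β}

theorem injOn_update_of_notMem_image (hφ : InjOn φ S) (hw : w ∉ φ '' S) :
    InjOn (update φ c w) S := by
  intro x hx y hy hxy
  by_cases hxc : x = c <;> by_cases hyc : y = c
  · rw [hxc, hyc]
  · rw [hxc, update_self, update_of_ne hyc] at hxy
    exact absurd ⟨y, hy, hxy.symm⟩ hw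
  · rw [hyc, update_self, update_of_ne hxc] at hxy
    exact absurd ⟨x, hx, hxy⟩ hw
  · rw [update_of_ne hxc, update_of_ne hyc] at hxy
    exact hφ hx hy hxy

theorem injOn_insert_update_update (hφ : InjOn φ S) (hc : c ∈ S) (hν : ν ∉ S)
    (hw : w ∉ φ '' S) : InjOn (update (update φ c w) ν (φ c)) (insert ν S) := by
  have heq : EqOn (update (update φ c w) ν (φ c)) (update φ c w) S := fun x hx =>
    update_of_ne (ne_of_mem_of_not_mem hx hν) _ _
  rw [injOn_insert hν, heq.image_eq, update_self]
  refine ⟨(injOn_update_of_notMem_image hφ hw).congr heq.symm, ?_⟩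
  rintro ⟨x, hx, hxc⟩
  by_cases h : x = c
  · rw [h, update_self] at hxc
    exact hw ⟨c, hc, hxc.symm⟩
  · rw [update_of_ne h] at hxc
    exact h (hφ hx hc hxc)

theorem map_rel_update {F : α → α → Prop} {D : β → β → Prop}
    (hφ : ∀ a b, F a b → D (φ a) (φ b)) (hcc : ¬ F c c)
    (hout : ∀ x, F c x → D w (φ x)) (hin : ∀ x, F x c → D (φ x) w) {a b : α} (hab : F a b) :
    D (update φ c w a) (update φ c w b) := by
  by_cases ha : a = c <;> by_cases hb : b = c
  · subst ha hb
    exact absurd hab hcc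
  · subst ha
    rw [update_self, update_of_ne hb]
    exact hout b hab
  · subst hb
    rw [update_self, update_of_ne ha]
    exact hin a hab
  · rw [update_of_ne ha, update_of_ne hb]
    exact hφ a b hab

end Relocation

section Absorption

variable {VT VD : Type*}

/-- Together with `D u (φ₀ v)` (resp. `D (φ₀ v) u`), this says that the star of `R` centred at `v`
is `(u, +, w)`-absorbing (resp. `(u, -, w)`-absorbing) under `φ₀`. -/
def AbsorbsInto (R : VT → VT → Prop) (D : VD → VD → Prop) (φ₀ : VT → VD) (w : VD) (v : VT) :
    Prop :=
  (∀ x, R v x → D w (φ₀ x)) ∧ (∀ x, R x v → D (φ₀ x) w)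

variable {N : ℕ} (e : Fin N → VT × VT) (D : VD → VD → Prop) (φ₀ : VT → VD) (C : Set VT) (m : ℕ)

/-- `φ` embeds the first `t` edges, and the star of every centre in `C \ B` is embedded exactly
as by `φ₀`, with no edge beyond the first `m` at its centre. -/
structure IsStarPreservingExtension (t : ℕ) (φ : VT → VD) (B : Set VT) : Prop where
  injOn : InjOn φ (spannedVertices e t)
  map_rel : ∀ a b, prefixRel e t a b → D (φ a) (φ b)
  eqOn_closedStar : ∀ c ∈ C, c ∉ B → EqOn φ φ₀ (closedStar (prefixRel e m) c)
  prefixRel_of_incident :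
    ∀ c ∈ C, c ∉ B → ∀ a b, prefixRel e t a b → (a = c ∨ b = c) → prefixRel e m a b

variable {e D φ₀ C m}

theorem isStarPreservingExtension_base (hφinj : InjOn φ₀ (spannedVertices e m))
    (hφedge : ∀ a b, prefixRel e m a b → D (φ₀ a) (φ₀ b)) :
    IsStarPreservingExtension e D φ₀ C m m φ₀ ∅ :=
  ⟨hφinj, hφedge, fun _ _ _ => eqOn_refl _ _, fun _ _ _ _ _ h _ => h⟩

theorem IsStarPreservingExtension.relocate [DecidableEq VT] {t : ℕ} {φ : VT → VD} {B : Set VT}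
    (hE : IsStarPreservingExtension e D φ₀ C m t φ B) (hmt : m ≤ t) (ht : t < N)
    (hloop : ∀ j, (e j).1 ≠ (e j).2) (hCV : C ⊆ spannedVertices e m)
    (hdisj : C.Pairwise fun v w =>
      Disjoint (closedStar (prefixRel e m) v) (closedStar (prefixRel e m) w))
    {p ν c : VT} {w : VD} (hp : p ∈ spannedVertices e t) (hν : ν ∉ spannedVertices e t)
    (hw : w ∉ φ '' spannedVertices e t) (hc : c ∈ C) (hcB : c ∉ insert p B)
    (habs : AbsorbsInto (prefixRel e m) D φ₀ w c)
    (hnew : e ⟨t, ht⟩ = (p, ν) ∧ D (φ p) (φ₀ c) ∨ e ⟨t, ht⟩ = (ν, p) ∧ D (φ₀ c) (φ p)) :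
    IsStarPreservingExtension e D φ₀ C m (t + 1) (update (update φ c w) ν (φ c))
      (insert c (insert p B)) := by
  have he : e ⟨t, ht⟩ = (p, ν) ∨ e ⟨t, ht⟩ = (ν, p) := hnew.imp And.left And.left
  have hSm : spannedVertices e m ⊆ spannedVertices e t := spannedVertices_mono hmt
  have hcS : c ∈ spannedVertices e t := hSm (hCV hc)
  have hcB₀ : c ∉ B := fun h => hcB (mem_insert_of_mem p h)
  have hφc : φ c = φ₀ c := hE.eqOn_closedStar c hc hcB₀ (Or.inl (Or.inl rfl))
  have hoff : ∀ x ∈ spannedVertices e t,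
      update (update φ c w) ν (φ c) x = update φ c w x := fun x hx =>
    update_of_ne (ne_of_mem_of_not_mem hx hν) _ _
  refine ⟨?_, ?_, ?_, ?_⟩
  · rw [spannedVertices_succ_eq_insert ht hp he]
    exact injOn_insert_update_update hE.injOn hcS hν hw
  · intro a b hab
    rcases (prefixRel_succ ht).mp hab with hab | hab
    · -- the star of `c` was intact, so re-centring it at `w` keeps its edges
      obtain ⟨ha, hb⟩ := mem_spannedVertices_of_prefixRel hab
      rw [hoff a ha, hoff b hb]
      refine map_rel_update hE.map_rel (prefixRel_irrefl hloop c) (fun x hx => ?_)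
        (fun x hx => ?_) hab
      · have hx₀ := hE.prefixRel_of_incident c hc hcB₀ c x hx (Or.inl rfl)
        rw [hE.eqOn_closedStar c hc hcB₀ (Or.inl (Or.inr hx₀))]
        exact habs.1 x hx₀
      · have hx₀ := hE.prefixRel_of_incident c hc hcB₀ x c hx (Or.inr rfl)
        rw [hE.eqOn_closedStar c hc hcB₀ (Or.inr hx₀)]
        exact habs.2 x hx₀
    · have hpc : p ≠ c := fun h => hcB (h ▸ mem_insert p B)
      have hpν : p ≠ ν := ne_of_mem_of_not_mem hp hν
      rcases hnew with ⟨he, hD⟩ | ⟨he, hD⟩ <;> rw [he, Prod.mk.injEq] at hab <;>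
        obtain ⟨rfl, rfl⟩ := hab <;>
        simpa only [update_self, update_of_ne hpν, update_of_ne hpc, hφc] using hD
  · intro c' hc' hc'B x hx
    have hc'c : c' ≠ c := fun h => hc'B (h ▸ mem_insert _ _)
    have hxS : x ∈ spannedVertices e t := hSm (closedStar_prefixRel_subset (hCV hc') hx)
    have hxc : x ≠ c := by
      rintro rfl
      exact disjoint_left.mp (hdisj hc' hc hc'c) hx (Or.inl (Or.inl rfl))
    rw [hoff x hxS, update_of_ne hxc]
    exact hE.eqOn_closedStar c' hc' (fun h => hc'B (mem_insert_of_mem c (mem_insert_of_mem p h))) hx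
  · intro c' hc' hc'B a b hab hinc
    have hc'B₀ : c' ∉ B := fun h => hc'B (mem_insert_of_mem c (mem_insert_of_mem p h))
    rcases (prefixRel_succ ht).mp hab with hab | hab
    · exact hE.prefixRel_of_incident c' hc' hc'B₀ a b hab hinc
    · have hc'p : c' ≠ p := fun h => hc'B (mem_insert_of_mem c (h ▸ mem_insert p B))
      have hc'ν : c' ≠ ν := ne_of_mem_of_not_mem (hSm (hCV hc')) hν
      rcases he with he | he <;> rw [he, Prod.mk.injEq] at hab <;>
        obtain ⟨rfl, rfl⟩ := hab <;> rcases hinc with rfl | rfl <;> contradiction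

end Absorption

theorem exists_isStarPreservingExtension {VT VD : Type*} [Finite VT] [Finite VD] {N : ℕ}
    {e : Fin N → VT × VT} {D : VD → VD → Prop} {φ₀ : VT → VD} {C : Set VT} {m : ℕ}
    (hcard : Nat.card VT ≤ Nat.card VD) (hv : IsValidOrdering e)
    (hloop : ∀ j, (e j).1 ≠ (e j).2) (hm : 0 < m)
    (hφinj : InjOn φ₀ (spannedVertices e m))
    (hφedge : ∀ a b, prefixRel e m a b → D (φ₀ a) (φ₀ b)) (hCV : C ⊆ spannedVertices e m)
    (hdisj : C.Pairwise fun v w =>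
      Disjoint (closedStar (prefixRel e m) v) (closedStar (prefixRel e m) w))
    (habsP : ∀ u w, 2 * (N - m) ≤
      {v ∈ C | D u (φ₀ v) ∧ AbsorbsInto (prefixRel e m) D φ₀ w v}.ncard)
    (habsM : ∀ u w, 2 * (N - m) ≤
      {v ∈ C | D (φ₀ v) u ∧ AbsorbsInto (prefixRel e m) D φ₀ w v}.ncard) (k : ℕ)
    (hk : m + k ≤ N) :
    ∃ φ B, B.ncard ≤ 2 * k ∧ IsStarPreservingExtension e D φ₀ C m (m + k) φ B := by
  classical
  induction k with
  | zero => exact ⟨φ₀, ∅, by simp, isStarPreservingExtension_base hφinj hφedge⟩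
  | succ k ih =>
    obtain ⟨φ, B, hB, hE⟩ := ih (by omega)
    have ht : m + k < N := by omega
    obtain ⟨p, ν, hp, hν, he⟩ := hv.exists_mem_notMem hloop (by omega) ht
    obtain ⟨w, hw⟩ :=
      exists_notMem_image_of_ne_univ hcard (ne_univ_iff_exists_notMem _ |>.mpr ⟨ν, hν⟩) φ
    -- at most `2k + 1` centres are spoiled or equal to `p`, fewer than there are absorbers
    have hpB : (insert p B).ncard < 2 * (N - m) := (ncard_insert_le p B).trans_lt (by omega)
    obtain ⟨c, hc, hcB, habs, hnew⟩ : ∃ c ∈ C, c ∉ insert p B ∧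
        AbsorbsInto (prefixRel e m) D φ₀ w c ∧
        (e ⟨m + k, ht⟩ = (p, ν) ∧ D (φ p) (φ₀ c) ∨ e ⟨m + k, ht⟩ = (ν, p) ∧ D (φ₀ c) (φ p)) := by
      rcases he with he | he
      · obtain ⟨c, ⟨hc, hD, habs⟩, hcB⟩ :=
          exists_mem_notMem_of_ncard_lt_ncard (hpB.trans_le (habsP (φ p) w))
        exact ⟨c, hc, hcB, habs, Or.inl ⟨he, hD⟩⟩
      · obtain ⟨c, ⟨hc, hD, habs⟩, hcB⟩ :=
          exists_mem_notMem_of_ncard_lt_ncard (hpB.trans_le (habsM (φ p) w))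
        exact ⟨c, hc, hcB, habs, Or.inr ⟨he, hD⟩⟩
    refine ⟨_, _, ?_, hE.relocate (by omega) ht hloop hCV hdisj hp hν hw hc hcB habs hnew⟩
    have := ncard_insert_le c (insert p B)
    have := ncard_insert_le p B
    omega

theorem stmt_3_general {VT VD : Type*} [Fintype VT] [Fintype VD]
    (n i : ℕ) (hVT : Fintype.card VT = n) (hVD : Fintype.card VD = n)
    (hi1 : 1 ≤ i) (hi2 : i ≤ n - 2)
    (T : VT → VT → Prop) (hloop : ∀ a, ¬ T a a)
    (e : Fin (n - 1) → VT × VT)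
    (heT : ∀ j, T (e j).1 (e j).2)
    (hesurj : ∀ a b, T a b → ∃ j, e j = (a, b))
    (hvalid : ∀ j : Fin (n - 1), ∀ h : (j : ℕ) + 1 < n - 1,
      ({v : VT | ∃ k : Fin (n - 1), k ≤ j ∧ ((e k).1 = v ∨ (e k).2 = v)} ∩
        {(e ⟨(j : ℕ) + 1, h⟩).1, (e ⟨(j : ℕ) + 1, h⟩).2}).ncard = 1)
    (T₀ : VT → VT → Prop)
    (hT₀ : ∀ a b, T₀ a b ↔ ∃ j : Fin (n - 1), (j : ℕ) < n - 1 - i ∧ e j = (a, b))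
    (V₀ : Set VT)
    (hV₀ : V₀ = {v | ∃ j : Fin (n - 1), (j : ℕ) < n - 1 - i ∧ ((e j).1 = v ∨ (e j).2 = v)})
    (hV₀card : V₀.ncard = n - i)
    (D : VD → VD → Prop)
    (φ₀ : VT → VD)
    (hφinj : Set.InjOn φ₀ V₀)
    (hφedge : ∀ a b, T₀ a b → D (φ₀ a) (φ₀ b))
    (C : Set VT) (hCV : C ⊆ V₀)
    (hdisj : C.Pairwise fun v w =>
      Disjoint ({v} ∪ {u | T₀ v u} ∪ {u | T₀ u v})
               ({w} ∪ {u | T₀ w u} ∪ {u | T₀ u w}))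
    (habsP : ∀ u w : VD, 2 * i ≤
      {v ∈ C | D u (φ₀ v) ∧ (∀ x, T₀ v x → D w (φ₀ x)) ∧ (∀ x, T₀ x v → D (φ₀ x) w)}.ncard)
    (habsM : ∀ u w : VD, 2 * i ≤
      {v ∈ C | D (φ₀ v) u ∧ (∀ x, T₀ v x → D w (φ₀ x)) ∧ (∀ x, T₀ x v → D (φ₀ x) w)}.ncard) :
    ∃ φ : VT → VD, Function.Injective φ ∧ ∀ a b, T a b → D (φ a) (φ b) := by
  obtain rfl : T₀ = prefixRel e (n - 1 - i) := by ext a b; exact hT₀ a b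
  subst hV₀
  have hv : IsValidOrdering e := hvalid
  have hloop' : ∀ j, (e j).1 ≠ (e j).2 := fun j h => hloop _ (h ▸ heT j)
  have hm : 0 < n - 1 - i := by omega
  have hi : n - 1 - (n - 1 - i) = i := by omega
  obtain ⟨φ, B, -, hE⟩ := exists_isStarPreservingExtension (by simp [hVT, hVD]) hv hloop' hm
    hφinj hφedge hCV hdisj (by rw [hi]; exact habsP) (by rw [hi]; exact habsM) i (by omega)
  have hcount := hv.ncard_spannedVertices_add hloop' hm i (by omega)
  rw [show n - 1 - i + i = n - 1 by omega] at hE hcount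
  have huniv : spannedVertices e (n - 1) = univ := by
    rw [eq_univ_iff_ncard, Nat.card_eq_fintype_card, hVT, hcount]
    change (spannedVertices e (n - 1 - i)).ncard = n - i at hV₀card
    omega
  refine ⟨φ, injOn_univ.mp (huniv ▸ hE.injOn), fun a b hab => ?_⟩
  obtain ⟨j, hj⟩ := hesurj a b hab
  exact hE.map_rel a b ⟨j, j.isLt, hj⟩

/-- The Absorbing Lemma: if the partial embedding `φ₀` of the subtree `T₀` (consisting of the
first `n-1-i` edges in a valid ordering of the `n`-vertex oriented tree `T`) admits, for every
pair of vertices `u, w` of the `n`-vertex digraph `D` and every direction, at least `2i`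
absorbing stars from a vertex-disjoint family of stars of `T₀`, then `T` embeds into `D`. -/
theorem stmt_3 {VT VD : Type*} [Fintype VT] [Fintype VD]
    (n i : ℕ) (hVT : Fintype.card VT = n) (hVD : Fintype.card VD = n)
    (hi1 : 1 ≤ i) (hi2 : i ≤ n - 2)
    (T : VT → VT → Prop) (hloop : ∀ a, ¬ T a a) (horient : ∀ a b, T a b → ¬ T b a)
    (htree : (SimpleGraph.fromRel T).IsTree)
    (e : Fin (n - 1) → VT × VT)
    (heinj : Function.Injective e)
    (heT : ∀ j, T (e j).1 (e j).2)
    (hesurj : ∀ a b, T a b → ∃ j, e j = (a, b))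
    (hvalid : ∀ j : Fin (n - 1), ∀ h : (j : ℕ) + 1 < n - 1,
      ({v : VT | ∃ k : Fin (n - 1), k ≤ j ∧ ((e k).1 = v ∨ (e k).2 = v)} ∩
        {(e ⟨(j : ℕ) + 1, h⟩).1, (e ⟨(j : ℕ) + 1, h⟩).2}).ncard = 1)
    (T₀ : VT → VT → Prop)
    (hT₀ : ∀ a b, T₀ a b ↔ ∃ j : Fin (n - 1), (j : ℕ) < n - 1 - i ∧ e j = (a, b))
    (V₀ : Set VT)
    (hV₀ : V₀ = {v | ∃ j : Fin (n - 1), (j : ℕ) < n - 1 - i ∧ ((e j).1 = v ∨ (e j).2 = v)})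
    (hV₀card : V₀.ncard = n - i)
    (D : VD → VD → Prop)
    (φ₀ : VT → VD)
    (hφinj : Set.InjOn φ₀ V₀)
    (hφedge : ∀ a b, T₀ a b → D (φ₀ a) (φ₀ b))
    (C : Set VT) (hCV : C ⊆ V₀)
    (hdisj : C.Pairwise fun v w =>
      Disjoint ({v} ∪ {u | T₀ v u} ∪ {u | T₀ u v})
               ({w} ∪ {u | T₀ w u} ∪ {u | T₀ u w}))
    (habsP : ∀ u w : VD, 2 * i ≤
      {v ∈ C | D u (φ₀ v) ∧ (∀ x, T₀ v x → D w (φ₀ x)) ∧ (∀ x, T₀ x v → D (φ₀ x) w)}.ncard)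
    (habsM : ∀ u w : VD, 2 * i ≤
      {v ∈ C | D (φ₀ v) u ∧ (∀ x, T₀ v x → D w (φ₀ x)) ∧ (∀ x, T₀ x v → D (φ₀ x) w)}.ncard) :
    ∃ φ : VT → VD, Function.Injective φ ∧ ∀ a b, T a b → D (φ a) (φ b) :=
  stmt_3_general n i hVT hVD hi1 hi2 T hloop e heT hesurj hvalid T₀ hT₀ V₀ hV₀ hV₀card D φ₀ hφinj
    hφedge C hCV hdisj habsP habsM
end

section
/- (Azuma–Hoeffding inequality) Suppose (M_t)_{t≥0} is a martingale and for all t ≥ 1 it holds that |M_t − M_{t−1}| ≤ L almost surely. Then for any positive integer N and any ε > 0, Pr[|M_N − M_0| ≥ ε] ≤ 2 exp(−ε² / (2 N L²)). -/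
/-!
By convexity of `exp`, an increment `D` with `|D| ≤ L` satisfies
`exp (t D) ≤ cosh (t L) + (D / L) sinh (t L)`. After multiplying by the `ℱ n`-measurable weight
`exp (t (M n - M 0))` and integrating, the martingale property kills the term linear in `D`, so
each step multiplies the moment generating function of `M n - M 0` by at most
`cosh (t L) ≤ exp (t² L² / 2)`. Thus `M N - M 0` is sub-Gaussian with parameter `N L²`, and the
Chernoff bound for `±(M N - M 0)` gives the two-sided tail.
-/

open MeasureTheory ProbabilityTheory Real
open scoped NNReal

lemma Real.exp_mul_le_cosh_add_div_mul_sinh {L x : ℝ} (c : ℝ) (hL : 0 < L) (hx : |x| ≤ L) :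
    exp (c * x) ≤ cosh (c * L) + x / L * sinh (c * L) := by
  obtain ⟨hxl, hxr⟩ := abs_le.mp hx
  have ha : 0 ≤ (L + x) / (2 * L) := by apply div_nonneg <;> linarith
  have hb : 0 ≤ (L - x) / (2 * L) := by apply div_nonneg <;> linarith
  have hab : (L + x) / (2 * L) + (L - x) / (2 * L) = 1 := by field_simp; ring
  have hchord := convexOn_exp.2 (Set.mem_univ (c * L)) (Set.mem_univ (-(c * L))) ha hb hab
  have hcx : (L + x) / (2 * L) * (c * L) + (L - x) / (2 * L) * (-(c * L)) = c * x := by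
    field_simp; ring
  simp only [smul_eq_mul, hcx] at hchord
  refine hchord.trans_eq ?_
  rw [cosh_eq, sinh_eq, exp_neg]
  field_simp
  ring

lemma MeasureTheory.Martingale.integral_mul_sub_eq_zero {Ω ι : Type*} {m0 : MeasurableSpace Ω}
    {μ : Measure Ω} [IsFiniteMeasure μ] [Preorder ι] {ℱ : Filtration ι m0} {M : ι → Ω → ℝ}
    (hM : Martingale M ℱ μ) {i j : ι} (hij : i ≤ j) {f : Ω → ℝ} (hf : StronglyMeasurable[ℱ i] f)
    (hfM : Integrable (fun ω ↦ f ω * (M j ω - M i ω)) μ) :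
    ∫ ω, f ω * (M j ω - M i ω) ∂μ = 0 := by
  have hcond : μ[M j - M i | ℱ i] =ᵐ[μ] 0 := by
    filter_upwards [condExp_sub (hM.integrable j) (hM.integrable i) (ℱ i),
      hM.condExp_ae_eq hij, hM.condExp_ae_eq (le_refl i)] with ω hsub hj hi
    simp [hsub, hj, hi]
  have hpull : μ[f * (M j - M i) | ℱ i] =ᵐ[μ] f * μ[M j - M i | ℱ i] :=
    condExp_mul_of_stronglyMeasurable_left hf hfM ((hM.integrable j).sub (hM.integrable i))
  have hzero : f * μ[M j - M i | ℱ i] =ᵐ[μ] 0 := by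
    filter_upwards [hcond] with ω h
    simp [h]
  calc ∫ ω, f ω * (M j ω - M i ω) ∂μ = ∫ ω, (μ[f * (M j - M i) | ℱ i]) ω ∂μ :=
        (integral_condExp (ℱ.le i)).symm
    _ = 0 := by rw [integral_congr_ae (hpull.trans hzero), Pi.zero_def, integral_zero]

namespace MeasureTheory.Martingale

variable {Ω : Type*} {m0 : MeasurableSpace Ω} {μ : Measure Ω} {ℱ : Filtration ℕ m0}
  {M : ℕ → Ω → ℝ} {L : ℝ}

lemma integral_mul_exp_mul_sub_le [IsFiniteMeasure μ] (hM : Martingale M ℱ μ) (hL : 0 < L)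
    {n : ℕ} (hD : ∀ᵐ ω ∂μ, |M (n + 1) ω - M n ω| ≤ L) {f : Ω → ℝ}
    (hf : StronglyMeasurable[ℱ n] f) (hfi : Integrable f μ) (hf0 : 0 ≤ f) (t : ℝ) :
    ∫ ω, f ω * exp (t * (M (n + 1) ω - M n ω)) ∂μ ≤ cosh (t * L) * ∫ ω, f ω ∂μ := by
  have hfD : Integrable (fun ω ↦ f ω * (M (n + 1) ω - M n ω)) μ :=
    hfi.mul_bdd ((hM.integrable (n + 1)).sub (hM.integrable n)).aestronglyMeasurable
      (hD.mono fun ω h ↦ by rwa [Real.norm_eq_abs])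
  calc ∫ ω, f ω * exp (t * (M (n + 1) ω - M n ω)) ∂μ
      ≤ ∫ ω, cosh (t * L) * f ω + sinh (t * L) / L * (f ω * (M (n + 1) ω - M n ω)) ∂μ := by
        refine integral_mono_of_nonneg (.of_forall fun ω ↦ mul_nonneg (hf0 ω) (exp_pos _).le)
          ((hfi.const_mul _).add (hfD.const_mul _)) (hD.mono fun ω h ↦ ?_)
        have := mul_le_mul_of_nonneg_left (exp_mul_le_cosh_add_div_mul_sinh t hL h) (hf0 ω)
        linear_combination this
    _ = cosh (t * L) * ∫ ω, f ω ∂μ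
          + sinh (t * L) / L * ∫ ω, f ω * (M (n + 1) ω - M n ω) ∂μ := by
        rw [integral_add (hfi.const_mul _) (hfD.const_mul _), integral_const_mul,
          integral_const_mul]
    _ = cosh (t * L) * ∫ ω, f ω ∂μ := by
        rw [hM.integral_mul_sub_eq_zero n.le_succ hf hfD, mul_zero, add_zero]

theorem hasSubgaussianMGF_sub_zero [IsProbabilityMeasure μ] (hM : Martingale M ℱ μ)
    (hL : 0 < L) (hbdd : ∀ n, ∀ᵐ ω ∂μ, |M (n + 1) ω - M n ω| ≤ L) (n : ℕ) :
    HasSubgaussianMGF (fun ω ↦ M n ω - M 0 ω) (n * ‖L‖₊ ^ 2) μ := by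
  induction n with
  | zero => simp [HasSubgaussianMGF.fun_zero]
  | succ n ih =>
    have hsplit (t : ℝ) : (fun ω ↦ exp (t * (M (n + 1) ω - M 0 ω))) =
        fun ω ↦ exp (t * (M n ω - M 0 ω)) * exp (t * (M (n + 1) ω - M n ω)) := by
      ext ω; rw [← exp_add]; ring_nf
    have hf (t : ℝ) : StronglyMeasurable[ℱ n] fun ω ↦ exp (t * (M n ω - M 0 ω)) :=
      continuous_exp.comp_stronglyMeasurable (((hM.stronglyMeasurable n).sub
        ((hM.stronglyMeasurable 0).mono (ℱ.mono n.zero_le))).const_mul t)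
    refine ⟨fun t ↦ ?_, fun t ↦ ?_⟩
    · rw [hsplit]
      refine (ih.integrable_exp_mul t).mul_bdd (c := exp (|t| * L)) ?_
        ((hbdd n).mono fun ω h ↦ ?_)
      · exact (continuous_exp.comp_aestronglyMeasurable (((hM.integrable (n + 1)).sub
          (hM.integrable n)).aestronglyMeasurable.const_mul t))
      · rw [Real.norm_eq_abs, abs_of_pos (exp_pos _), exp_le_exp]
        exact (le_abs_self _).trans ((abs_mul _ _).trans_le (by gcongr))
    · calc mgf (fun ω ↦ M (n + 1) ω - M 0 ω) μ t
          = ∫ ω, exp (t * (M n ω - M 0 ω)) * exp (t * (M (n + 1) ω - M n ω)) ∂μ := by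
            rw [mgf, hsplit]
        _ ≤ cosh (t * L) * mgf (fun ω ↦ M n ω - M 0 ω) μ t :=
            hM.integral_mul_exp_mul_sub_le hL (hbdd n) (hf t) (ih.integrable_exp_mul t)
              (fun ω ↦ (exp_pos _).le) t
        _ ≤ exp ((t * L) ^ 2 / 2) * exp (↑(n * ‖L‖₊ ^ 2) * t ^ 2 / 2) :=
            mul_le_mul (cosh_le_exp_half_sq _) (ih.mgf_le t) mgf_nonneg (exp_pos _).le
        _ = exp (↑((n + 1 : ℕ) * ‖L‖₊ ^ 2) * t ^ 2 / 2) := by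
            rw [← exp_add]; push_cast; rw [Real.norm_eq_abs, sq_abs]; ring_nf

end MeasureTheory.Martingale

lemma ProbabilityTheory.HasSubgaussianMGF.measureReal_abs_ge_le {Ω : Type*}
    {m0 : MeasurableSpace Ω} {μ : Measure Ω} [IsFiniteMeasure μ] {X : Ω → ℝ} {c : ℝ≥0}
    (h : HasSubgaussianMGF X c μ) {ε : ℝ} (hε : 0 ≤ ε) :
    μ.real {ω | ε ≤ |X ω|} ≤ 2 * exp (-ε ^ 2 / (2 * c)) := by
  have hsub : {ω | ε ≤ |X ω|} ⊆ {ω | ε ≤ X ω} ∪ {ω | ε ≤ (-X) ω} := fun ω hω ↦ by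
    rcases le_abs'.mp (show ε ≤ |X ω| from hω) with h | h
    · exact .inr (show ε ≤ -X ω by linarith)
    · exact .inl h
  calc μ.real {ω | ε ≤ |X ω|} ≤ μ.real {ω | ε ≤ X ω} + μ.real {ω | ε ≤ (-X) ω} :=
        (measureReal_mono hsub).trans (measureReal_union_le _ _)
    _ ≤ 2 * exp (-ε ^ 2 / (2 * c)) := by
        linarith [h.measure_ge_le hε, h.neg.measure_ge_le hε]

theorem stmt_6_general {Ω : Type*} {m0 : MeasurableSpace Ω} {μ : Measure Ω}
    [IsProbabilityMeasure μ] (ℱ : Filtration ℕ m0) (M : ℕ → Ω → ℝ)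
    (hM : Martingale M ℱ μ) (L : ℝ) (hL : 0 < L)
    (hbdd : ∀ t : ℕ, 1 ≤ t → ∀ᵐ ω ∂μ, |M t ω - M (t - 1) ω| ≤ L)
    (N : ℕ) (ε : ℝ) (hε : 0 < ε) :
    μ {ω | ε ≤ |M N ω - M 0 ω|} ≤
      ENNReal.ofReal (2 * Real.exp (-ε ^ 2 / (2 * N * L ^ 2))) := by
  have hincr (n : ℕ) : ∀ᵐ ω ∂μ, |M (n + 1) ω - M n ω| ≤ L := by
    simpa using hbdd (n + 1) n.succ_pos
  have htail := (hM.hasSubgaussianMGF_sub_zero hL hincr N).measureReal_abs_ge_le hε.le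
  rw [← ofReal_measureReal]
  refine ENNReal.ofReal_le_ofReal (htail.trans_eq ?_)
  push_cast
  rw [Real.norm_eq_abs, sq_abs, mul_assoc]

/-- The Azuma–Hoeffding inequality. -/
theorem stmt_6 {Ω : Type*} {m0 : MeasurableSpace Ω} {μ : Measure Ω}
    [IsProbabilityMeasure μ] (ℱ : Filtration ℕ m0) (M : ℕ → Ω → ℝ)
    (hM : Martingale M ℱ μ) (L : ℝ) (hL : 0 < L)
    (hbdd : ∀ t : ℕ, 1 ≤ t → ∀ᵐ ω ∂μ, |M t ω - M (t - 1) ω| ≤ L)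
    (N : ℕ) (hN : 0 < N) (ε : ℝ) (hε : 0 < ε) :
    μ {ω | ε ≤ |M N ω - M 0 ω|} ≤
      ENNReal.ofReal (2 * Real.exp (-ε ^ 2 / (2 * N * L ^ 2))) :=
  stmt_6_general ℱ M hM L hL hbdd N ε hε
end

section
/- Let T be an oriented tree with a valid edge ordering e_1, ..., e_{n-1}, let T_j be the subtree formed by the first n−1−i+j edges, let φ_j be an embedding of T_j into a digraph D, and let e = (v₁, v₂) be the next edge with v₁ ∈ V(T_j) and v₂ ∉ V(T_j). Let x ∈ V(D) \ Im(φ_j), and suppose S_v = (v, N_T⁺(v), N_T⁻(v)) is a star in T_j that is (φ_j(v₁), +, x)-absorbing under φ_j, with v ∉ {v₁} and S_v vertex-disjoint from v₁'s star. Define φ_{j+1} by φ_{j+1}(v) = x, φ_{j+1}(v₂) = φ_j(v), and φ_{j+1}(v') = φ_j(v') otherwise. Then φ_{j+1} is an injective embedding of T_{j+1} into D with Im(φ_{j+1}) = Im(φ_j) ∪ {x}. -/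
/-!
The modified map agrees with `φⱼ ∘ swap v v₂` away from `v`, and sends `v` to the fresh vertex `x`.
Hence it is injective with image `Im(φⱼ) ∪ {x}`. The edges of `Tⱼ` at `v` are mapped to edges at
`x` because the star of `v` is absorbing, the other edges of `Tⱼ` keep their images, and the new
edge `(v₁, v₂)` is mapped to `(φⱼ(v₁), φⱼ(v))`, which is an edge of `D` by absorption as well.
-/

namespace AbsorbingStep

variable {α β : Type*} [DecidableEq α]

def absorb (φ : α → β) (v v₂ : α) (x : β) : α → β :=
  fun z => if z = v then x else if z = v₂ then φ v else φ z

variable {φ : α → β} {s : Set α} {v v₂ : α} {x : β}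

@[simp]
lemma absorb_apply_left : absorb φ v v₂ x v = x := if_pos rfl

lemma absorb_apply_right (h : v₂ ≠ v) : absorb φ v v₂ x v₂ = φ v := by
  simp [absorb, h]

lemma absorb_apply_of_ne_of_ne {z : α} (hv : z ≠ v) (hv₂ : z ≠ v₂) : absorb φ v v₂ x z = φ z := by
  simp [absorb, hv, hv₂]

lemma absorb_eq_comp_swap {z : α} (hz : z ≠ v) :
    absorb φ v v₂ x z = φ (Equiv.swap v v₂ z) := by
  by_cases hz₂ : z = v₂
  · subst hz₂
    rw [absorb_apply_right hz, Equiv.swap_apply_right]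
  · rw [absorb_apply_of_ne_of_ne hz hz₂, Equiv.swap_apply_of_ne_of_ne hz hz₂]

variable (hv : v ∈ s) (hv₂ : v₂ ∉ s)
include hv hv₂

lemma swap_mem_of_mem_union {z : α} (hz : z ∈ s ∪ {v₂}) (hzv : z ≠ v) :
    Equiv.swap v v₂ z ∈ s := by
  rcases hz with hz | rfl
  · rwa [Equiv.swap_apply_of_ne_of_ne hzv (ne_of_mem_of_not_mem hz hv₂)]
  · rwa [Equiv.swap_apply_right]

lemma absorb_apply_eq_iff (hx : x ∉ φ '' s) {z : α} (hz : z ∈ s ∪ {v₂}) :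
    absorb φ v v₂ x z = x ↔ z = v := by
  refine ⟨fun h => by_contra fun hzv => hx ⟨_, swap_mem_of_mem_union hv hv₂ hz hzv, ?_⟩, ?_⟩
  · rw [← absorb_eq_comp_swap (φ := φ) (x := x) hzv, h]
  · rintro rfl
    exact absorb_apply_left

lemma injOn_absorb (hφ : Set.InjOn φ s) (hx : x ∉ φ '' s) :
    Set.InjOn (absorb φ v v₂ x) (s ∪ {v₂}) := by
  intro a ha b hb hab
  by_cases hav : a = v
  · rw [hav, absorb_apply_left, eq_comm, absorb_apply_eq_iff hv hv₂ hx hb] at hab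
    rw [hav, hab]
  have hbv : b ≠ v := fun hbv => hav <| by
    rwa [hbv, absorb_apply_left, absorb_apply_eq_iff hv hv₂ hx ha] at hab
  rw [absorb_eq_comp_swap hav, absorb_eq_comp_swap hbv] at hab
  exact (Equiv.swap v v₂).injective <|
    hφ (swap_mem_of_mem_union hv hv₂ ha hav) (swap_mem_of_mem_union hv hv₂ hb hbv) hab

lemma image_absorb : absorb φ v v₂ x '' (s ∪ {v₂}) = φ '' s ∪ {x} := by
  ext y
  simp only [Set.mem_image, Set.mem_union, Set.mem_singleton_iff]
  constructor
  · rintro ⟨z, hz, rfl⟩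
    by_cases hzv : z = v
    · exact Or.inr (hzv ▸ absorb_apply_left)
    · exact Or.inl ⟨_, swap_mem_of_mem_union hv hv₂ hz hzv, (absorb_eq_comp_swap hzv).symm⟩
  · rintro (⟨z, hz, rfl⟩ | rfl)
    · by_cases hzv : z = v
      · rw [hzv]
        exact ⟨v₂, Or.inr rfl, absorb_apply_right (ne_of_mem_of_not_mem hv hv₂).symm⟩
      · exact ⟨z, Or.inl hz, absorb_apply_of_ne_of_ne hzv (ne_of_mem_of_not_mem hz hv₂)⟩
    · exact ⟨v, Or.inl hv, absorb_apply_left⟩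

omit hv in
lemma map_rel_absorb {R : α → α → Prop} {D : β → β → Prop}
    (hRs : ∀ a b, R a b → a ∈ s ∧ b ∈ s) (hloop : ¬ R v v)
    (hφ : ∀ a b, R a b → D (φ a) (φ b))
    (hout : ∀ y, R v y → D x (φ y)) (hin : ∀ y, R y v → D (φ y) x) {a b : α} (hab : R a b) :
    D (absorb φ v v₂ x a) (absorb φ v v₂ x b) := by
  have ha₂ := ne_of_mem_of_not_mem (hRs a b hab).1 hv₂
  have hb₂ := ne_of_mem_of_not_mem (hRs a b hab).2 hv₂
  by_cases hav : a = v
  · subst hav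
    have hba : b ≠ a := by rintro rfl; exact hloop hab
    rw [absorb_apply_left, absorb_apply_of_ne_of_ne hba hb₂]
    exact hout b hab
  by_cases hbv : b = v
  · subst hbv
    rw [absorb_apply_left, absorb_apply_of_ne_of_ne hav ha₂]
    exact hin a hab
  rw [absorb_apply_of_ne_of_ne hav ha₂, absorb_apply_of_ne_of_ne hbv hb₂]
  exact hφ a b hab

lemma map_new_edge_absorb {D : β → β → Prop} {v₁ : α} (hv₁ : v₁ ∈ s) (hv₁v : v₁ ≠ v)
    (h : D (φ v₁) (φ v)) : D (absorb φ v v₂ x v₁) (absorb φ v v₂ x v₂) := by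
  rwa [absorb_apply_of_ne_of_ne hv₁v (ne_of_mem_of_not_mem hv₁ hv₂),
    absorb_apply_right (ne_of_mem_of_not_mem hv hv₂).symm]

end AbsorbingStep

theorem stmt_10_general {VT VD : Type*} [DecidableEq VT]
    (T : VT → VT → Prop) (hloopT : ∀ a, ¬ T a a) (D : VD → VD → Prop)
    (Tj : VT → VT → Prop) (hsub : ∀ a b, Tj a b → T a b)
    (Vj : Set VT) (hVj : Vj = {z | ∃ y, Tj z y ∨ Tj y z})
    (φj : VT → VD)
    (hinj : Set.InjOn φj Vj)
    (hembed : ∀ a b, Tj a b → D (φj a) (φj b))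
    (v₁ v₂ : VT) (hv₁ : v₁ ∈ Vj) (hv₂ : v₂ ∉ Vj)
    (x : VD) (hx : x ∉ φj '' Vj)
    (v : VT) (hv : v ∈ Vj)
    (hdisj : Disjoint ({v} ∪ {y | T v y} ∪ {y | T y v})
                      ({v₁} ∪ {y | T v₁ y} ∪ {y | T y v₁}))
    (habs : D (φj v₁) (φj v) ∧ (∀ y, T v y → D x (φj y)) ∧ (∀ y, T y v → D (φj y) x))
    (φ' : VT → VD)
    (hφ' : φ' = fun z => if z = v then x else if z = v₂ then φj v else φj z) :
    Set.InjOn φ' (Vj ∪ {v₂}) ∧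
    (∀ a b, (Tj a b ∨ (a = v₁ ∧ b = v₂)) → D (φ' a) (φ' b)) ∧
    φ' '' (Vj ∪ {v₂}) = (φj '' Vj) ∪ {x} := by
  subst hφ'
  have hv₁v : v₁ ≠ v := by
    rintro rfl
    exact Set.disjoint_left.mp hdisj (Or.inl (Or.inl rfl)) (Or.inl (Or.inl rfl))
  have hTjVj : ∀ a b, Tj a b → a ∈ Vj ∧ b ∈ Vj := fun a b h =>
    hVj ▸ ⟨⟨b, Or.inl h⟩, ⟨a, Or.inr h⟩⟩
  refine ⟨AbsorbingStep.injOn_absorb hv hv₂ hinj hx, ?_, AbsorbingStep.image_absorb hv hv₂⟩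
  rintro a b (hab | ⟨rfl, rfl⟩)
  · exact AbsorbingStep.map_rel_absorb hv₂ hTjVj (fun h => hloopT v (hsub v v h)) hembed
      (fun y h => habs.2.1 y (hsub v y h)) (fun y h => habs.2.2 y (hsub y v h)) hab
  · exact AbsorbingStep.map_new_edge_absorb hv hv₂ hv₁ hv₁v habs.1

/-- A single absorbing step: using a `(φⱼ(v₁), +, x)`-absorbing star with center `v`,
the embedding `φⱼ` of the subtree `Tⱼ` can be modified — `x` takes over the role of `φⱼ(v)`
and `φⱼ(v)` is reassigned to the new leaf `v₂` — to give an injective embedding of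
`Tⱼ` plus the edge `(v₁, v₂)`, with image `Im(φⱼ) ∪ {x}`. -/
theorem stmt_10 {VT VD : Type*} [DecidableEq VT]
    (T : VT → VT → Prop) (hloopT : ∀ a, ¬ T a a) (D : VD → VD → Prop)
    (Tj : VT → VT → Prop) (hsub : ∀ a b, Tj a b → T a b)
    (Vj : Set VT) (hVj : Vj = {z | ∃ y, Tj z y ∨ Tj y z})
    (φj : VT → VD)
    (hinj : Set.InjOn φj Vj)
    (hembed : ∀ a b, Tj a b → D (φj a) (φj b))
    (v₁ v₂ : VT) (he : T v₁ v₂) (hv₁ : v₁ ∈ Vj) (hv₂ : v₂ ∉ Vj)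
    (x : VD) (hx : x ∉ φj '' Vj)
    (v : VT) (hv : v ∈ Vj)
    (hstar : ∀ y, T v y ∨ T y v → y ∈ Vj)
    (hstarTj : ∀ y, (T v y ↔ Tj v y) ∧ (T y v ↔ Tj y v))
    (hdisj : Disjoint ({v} ∪ {y | T v y} ∪ {y | T y v})
                      ({v₁} ∪ {y | T v₁ y} ∪ {y | T y v₁}))
    (habs : D (φj v₁) (φj v) ∧ (∀ y, T v y → D x (φj y)) ∧ (∀ y, T y v → D (φj y) x))
    (φ' : VT → VD)
    (hφ' : φ' = fun z => if z = v then x else if z = v₂ then φj v else φj z) :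
    Set.InjOn φ' (Vj ∪ {v₂}) ∧
    (∀ a b, (Tj a b ∨ (a = v₁ ∧ b = v₂)) → D (φ' a) (φ' b)) ∧
    φ' '' (Vj ∪ {v₂}) = (φj '' Vj) ∪ {x} :=
  stmt_10_general T hloopT D Tj hsub Vj hVj φj hinj hembed v₁ v₂ hv₁ hv₂ x hx v hv hdisj habs φ' hφ'
end

section
/- Let H be a collection of oriented graphs on vertex set [n]. Then Pr[∃ H ∈ H : H ⊆ D(n,p)] ≥ Pr[∃ H ∈ H : H ⊆ D*(n,p)], where D(n,p) includes each directed edge independently with probability p, and D*(n,p) includes, for each unordered pair {u,v}, both directed edges (u,v) and (v,u) together (independently over pairs) with probability p. -/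
/-!
Interpolate between `D(n,p)` and `D*(n,p)` by coupling the two orientations of one unordered pair
at a time. Fix all other edges and let `f x y` say whether the event holds when `(u,v)` has state
`x` and `(v,u)` has state `y`; coupling the pair replaces `f x y` by `f x x`. The event is monotone
and a copy of an oriented graph uses at most one of the two orientations, so a configuration is
lost by coupling only if it is `(1,0)` with `f 1 0` false, and then `f 0 1` holds while `f 0 0`
fails: the swapped configuration `(0,1)` is gained. Swapping the two coordinates preserves the
product measure, so each coupling step can only decrease the probability.
-/

open MeasureTheory Function

theorem measurePreserving_comp_swap {ι β : Type*} [Fintype ι] [DecidableEq ι] [MeasurableSpace β]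
    (ν : Measure β) [SigmaFinite ν] (i j : ι) :
    MeasurePreserving (· ∘ Equiv.swap i j) (Measure.pi fun _ : ι => ν) (Measure.pi fun _ => ν) := by
  convert measurePreserving_piCongrLeft (fun _ : ι => ν) (Equiv.swap i j) using 1
  ext ω k
  simp only [comp_apply, MeasurableEquiv.piCongrLeft, Equiv.piCongrLeft, Equiv.symm_swap,
    Equiv.piCongrLeft', Equiv.symm_mk, MeasurableEquiv.coe_mk, Equiv.coe_fn_mk]
  exact (eq_rec_constant _ _).symm

section CouplingStep

variable {ι : Type*} [DecidableEq ι] {i j : ι} {F : Set (ι → Bool)}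

theorem setOf_update_diff_subset_preimage_swap (hij : i ≠ j) (hF : IsUpperSet F)
    (hFij : ∀ ω ∈ F, update ω i false ∈ F ∨ update ω j false ∈ F) :
    {ω | update ω j (ω i) ∈ F} \ F ⊆
      (· ∘ Equiv.swap i j) ⁻¹' (F \ {ω | update ω j (ω i) ∈ F}) := by
  rintro ω ⟨hω', hω⟩
  have hlower : ∀ k, update ω k false ∉ F := fun k h =>
    hω (hF (update_le_iff.2 ⟨Bool.false_le _, fun _ _ => le_rfl⟩) h)
  simp only [Set.mem_ofPred_eq] at hω'
  cases hi : ω i <;> cases hj : ω j <;> rw [hi] at hω'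
  · exact absurd (by rwa [← hj, update_eq_self] at hω') hω
  · exact absurd hω' (hlower j)
  · have hswap : update (update ω j true) i false = ω ∘ Equiv.swap i j := by
      ext k
      rcases eq_or_ne k i with rfl | hki
      · simp [hj]
      rcases eq_or_ne k j with rfl | hkj
      · simp [hi, Ne.symm hij]
      · simp [hki, hkj, Equiv.swap_apply_of_ne_of_ne]
    rcases hFij _ hω' with h | h
    · rw [hswap] at h
      refine ⟨h, fun h' => hlower j (hF ?_ h')⟩
      simp only [comp_apply, Equiv.swap_apply_left, hj]
      refine update_le_iff.2 ⟨Bool.false_le _, fun k hkj => ?_⟩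
      rcases eq_or_ne k i with rfl | hki
      · simp [hj]
      · simp [Equiv.swap_apply_of_ne_of_ne hki hkj, hkj]
    · rw [update_idem, ← hj, update_eq_self] at h
      exact absurd h hω
  · exact absurd (by rwa [← hj, update_eq_self] at hω') hω

theorem measure_setOf_update_le [Finite ι] {μ : Measure (ι → Bool)} (hij : i ≠ j)
    (hμ : MeasurePreserving (· ∘ Equiv.swap i j) μ μ) (hF : IsUpperSet F)
    (hFij : ∀ ω ∈ F, update ω i false ∈ F ∨ update ω j false ∈ F) :
    μ {ω | update ω j (ω i) ∈ F} ≤ μ F := by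
  set F' := {ω | update ω j (ω i) ∈ F}
  calc μ F' ≤ μ (F' ∩ F) + μ (F' \ F) := measure_le_inter_add_sdiff μ F' F
    _ ≤ μ (F ∩ F') + μ (F \ F') := by
      rw [Set.inter_comm]
      refine add_le_add le_rfl ?_
      exact (measure_mono (setOf_update_diff_subset_preimage_swap hij hF hFij)).trans_eq
        (hμ.measure_preimage MeasurableSet.of_discrete.nullMeasurableSet)
    _ = μ F := measure_inter_add_sdiff F .of_discrete

end CouplingStep

section Digraphs

variable {α : Type*}

def containsCopy (ℋ : Set (α → α → Prop)) : Set (α × α → Bool) :=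
  {ω | ∃ H ∈ ℋ, ∃ φ : α → α, Injective φ ∧ ∀ a b, H a b → φ a ≠ φ b ∧ ω (φ a, φ b) = true}

theorem isUpperSet_containsCopy (ℋ : Set (α → α → Prop)) : IsUpperSet (containsCopy ℋ) := by
  rintro ω ω' hle ⟨H, hH, φ, hφ, hcopy⟩
  exact ⟨H, hH, φ, hφ, fun a b hab =>
    ⟨(hcopy a b hab).1, Bool.eq_true_of_true_le ((hcopy a b hab).2 ▸ hle _)⟩⟩

theorem update_mem_containsCopy [DecidableEq α] {ℋ : Set (α → α → Prop)}
    (hℋ : ∀ H ∈ ℋ, ∀ a b, H a b → ¬ H b a) {ω : α × α → Bool} (hω : ω ∈ containsCopy ℋ)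
    (k : α × α) :
    update ω k false ∈ containsCopy ℋ ∨ update ω k.swap false ∈ containsCopy ℋ := by
  obtain ⟨H, hH, φ, hφ, hcopy⟩ := hω
  by_cases hk : ∃ a b, H a b ∧ (φ a, φ b) = k.swap
  · left
    obtain ⟨a₀, b₀, hab₀, hk₀⟩ := hk
    refine ⟨H, hH, φ, hφ, fun a b hab => ⟨(hcopy a b hab).1, ?_⟩⟩
    rw [update_of_ne, (hcopy a b hab).2]
    rintro rfl
    simp only [Prod.swap_prod_mk, Prod.mk.injEq] at hk₀
    rw [hφ hk₀.1, hφ hk₀.2] at hab₀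
    exact hℋ H hH a b hab hab₀
  · right
    refine ⟨H, hH, φ, hφ, fun a b hab => ⟨(hcopy a b hab).1, ?_⟩⟩
    rw [update_of_ne (fun h => hk ⟨a, b, hab, h⟩), (hcopy a b hab).2]

variable [DecidableEq α]

-- With `T = {k | k.2 < k.1}`, the image of `D(n,p)` under `symmetrizeOn T` is `D*(n,p)`.
def symmetrizeOn (T : Finset (α × α)) (ω : α × α → Bool) : α × α → Bool :=
  fun k => if k ∈ T then ω k.swap else ω k

theorem symmetrizeOn_empty : symmetrizeOn (∅ : Finset (α × α)) = id := by
  ext ω k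
  simp [symmetrizeOn]

theorem monotone_symmetrizeOn (T : Finset (α × α)) : Monotone (symmetrizeOn T) :=
  fun _ _ hle k => by unfold symmetrizeOn; split_ifs <;> exact hle _

theorem symmetrizeOn_update {T : Finset (α × α)} {k : α × α} (hk : k ∉ T) (hk' : k.swap ∉ T)
    (ω : α × α → Bool) (x : Bool) :
    symmetrizeOn T (update ω k x) = update (symmetrizeOn T ω) k x := by
  ext l
  unfold symmetrizeOn
  rcases eq_or_ne l k with rfl | hl
  · simp [hk]
  · split_ifs with hlT
    · have : l.swap ≠ k := by rintro rfl; simp_all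
      simp [hlT, this, hl]
    · simp [hlT, hl]

theorem symmetrizeOn_insert {T : Finset (α × α)} {k : α × α} (hk : k ∉ T) (hk' : k.swap ∉ T)
    (ω : α × α → Bool) :
    symmetrizeOn (insert k T) ω = symmetrizeOn T (update ω k (ω k.swap)) := by
  rw [symmetrizeOn_update hk hk']
  ext l
  rcases eq_or_ne l k with rfl | hl
  · simp [symmetrizeOn]
  · simp [symmetrizeOn, hl]

theorem measure_preimage_symmetrizeOn_le [Finite α] {μ : Measure (α × α → Bool)}
    (hμ : ∀ k l : α × α, MeasurePreserving (· ∘ Equiv.swap k l) μ μ)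
    {E : Set (α × α → Bool)} (hE : IsUpperSet E)
    (hEswap : ∀ ω ∈ E, ∀ k, update ω k false ∈ E ∨ update ω k.swap false ∈ E)
    (T : Finset (α × α)) (hT : ∀ k ∈ T, k.swap ∉ T) :
    μ (symmetrizeOn T ⁻¹' E) ≤ μ E := by
  induction T using Finset.induction_on with
  | empty => rw [symmetrizeOn_empty, Set.preimage_id]
  | insert k T hkT ih =>
    have hk' : k.swap ∉ T := fun h =>
      hT k (Finset.mem_insert_self k T) (Finset.mem_insert_of_mem h)
    have hne : k.swap ≠ k := fun h =>
      hT k (Finset.mem_insert_self k T) (by rw [h]; exact Finset.mem_insert_self k T)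
    have hpre : symmetrizeOn (insert k T) ⁻¹' E =
        {ω | update ω k (ω k.swap) ∈ symmetrizeOn T ⁻¹' E} := by
      ext ω
      simp [symmetrizeOn_insert hkT hk']
    rw [hpre]
    refine (measure_setOf_update_le hne (hμ _ _) (hE.preimage (monotone_symmetrizeOn T))
      fun ω hω => ?_).trans (ih fun l hl h => hT l (Finset.mem_insert_of_mem hl)
        (Finset.mem_insert_of_mem h))
    rw [Set.mem_preimage, Set.mem_preimage,
      symmetrizeOn_update hk' (by rwa [Prod.swap_swap]), symmetrizeOn_update hkT hk']
    simpa only [Prod.swap_swap] using hEswap _ hω k.swap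

theorem preimage_symmetrizeOn_lt_containsCopy [LinearOrder α] [Fintype α]
    (ℋ : Set (α → α → Prop)) :
    symmetrizeOn (Finset.univ.filter fun k : α × α => k.2 < k.1) ⁻¹' containsCopy ℋ =
      {ω | ∃ H ∈ ℋ, ∃ φ : α → α, Injective φ ∧ ∀ a b, H a b →
        ((φ a < φ b ∧ ω (φ a, φ b) = true) ∨ (φ b < φ a ∧ ω (φ b, φ a) = true))} := by
  have hsymm : ∀ (ω : α × α → Bool) (a b : α),
      a ≠ b ∧ symmetrizeOn (Finset.univ.filter fun k : α × α => k.2 < k.1) ω (a, b) = true ↔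
        (a < b ∧ ω (a, b) = true) ∨ (b < a ∧ ω (b, a) = true) := by
    intro ω a b
    rcases lt_trichotomy a b with h | rfl | h
    · simp [symmetrizeOn, h, h.ne, h.not_gt]
    · simp
    · simp [symmetrizeOn, h, h.ne', h.not_gt]
  ext ω
  simp only [containsCopy, Set.mem_preimage, Set.mem_ofPred_eq, hsymm]

end Digraphs

theorem stmt_13_general (n : ℕ) (p : ℝ)
    (ℋ : Set (Fin n → Fin n → Prop))
    (hor : ∀ H ∈ ℋ, (∀ a, ¬ H a a) ∧ (∀ a b, H a b → ¬ H b a)) :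
    (Measure.pi fun _ : Fin n × Fin n =>
        (ENNReal.ofReal p) • Measure.dirac true +
        (ENNReal.ofReal (1 - p)) • Measure.dirac false)
      {ω | ∃ H ∈ ℋ, ∃ φ : Fin n → Fin n, Function.Injective φ ∧
        ∀ a b, H a b → (φ a ≠ φ b ∧ ω (φ a, φ b) = true)} ≥
    (Measure.pi fun _ : Fin n × Fin n =>
        (ENNReal.ofReal p) • Measure.dirac true +
        (ENNReal.ofReal (1 - p)) • Measure.dirac false)
      {ω | ∃ H ∈ ℋ, ∃ φ : Fin n → Fin n, Function.Injective φ ∧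
        ∀ a b, H a b → ((φ a < φ b ∧ ω (φ a, φ b) = true) ∨
                        (φ b < φ a ∧ ω (φ b, φ a) = true))} := by
  set ν : Measure Bool :=
    (ENNReal.ofReal p) • Measure.dirac true + (ENNReal.ofReal (1 - p)) • Measure.dirac false
  have : IsFiniteMeasure ν := ⟨by simp [ν, ENNReal.add_lt_top]⟩
  rw [← preimage_symmetrizeOn_lt_containsCopy]
  exact measure_preimage_symmetrizeOn_le (measurePreserving_comp_swap ν)
    (isUpperSet_containsCopy ℋ) (fun ω hω => update_mem_containsCopy (fun H hH => (hor H hH).2) hω)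
    _ fun k hk hk' => by simp_all [lt_asymm]

/-- McDiarmid's coupling: for a collection `ℋ` of oriented graphs on `[n]`, the probability that
`D(n,p)` contains some member of `ℋ` is at least the probability that `D*(n,p)` does, where
`D*(n,p)` includes, for each unordered pair, both opposite directed edges jointly with
probability `p`. -/
theorem stmt_13 (n : ℕ) (p : ℝ) (hp : 0 ≤ p ∧ p ≤ 1)
    (ℋ : Set (Fin n → Fin n → Prop))
    (hor : ∀ H ∈ ℋ, (∀ a, ¬ H a a) ∧ (∀ a b, H a b → ¬ H b a)) :
    (Measure.pi fun _ : Fin n × Fin n =>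
        (ENNReal.ofReal p) • Measure.dirac true +
        (ENNReal.ofReal (1 - p)) • Measure.dirac false)
      {ω | ∃ H ∈ ℋ, ∃ φ : Fin n → Fin n, Function.Injective φ ∧
        ∀ a b, H a b → (φ a ≠ φ b ∧ ω (φ a, φ b) = true)} ≥
    (Measure.pi fun _ : Fin n × Fin n =>
        (ENNReal.ofReal p) • Measure.dirac true +
        (ENNReal.ofReal (1 - p)) • Measure.dirac false)
      {ω | ∃ H ∈ ℋ, ∃ φ : Fin n → Fin n, Function.Injective φ ∧
        ∀ a b, H a b → ((φ a < φ b ∧ ω (φ a, φ b) = true) ∨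
                        (φ b < φ a ∧ ω (φ b, φ a) = true))} :=
  stmt_13_general n p ℋ hor
end
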